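/- arXiv:2302.08886 — 4 statements merged into one kernel-verified Lean document; each statement's English description precedes it below -/
import Mathlib

section
/- Let G be a bipartite graph. Then the following are equivalent: (i) h(G) = (1/4)·α(G); (ii) (1/2)·√(g(G)) = (1/4)·α(G); (iii) α(G) = α_bal(G). -/
open Finset

variable {V : Type*} [Fintype V] [DecidableEq V]

/-- `(A,B)` is a bipartite biindependent pair in `G` with respect to the bipartition
of the vertex set into `P` (the first side) and `Pᶜ` (the second side). -/
def IsBiindep (G : SimpleGraph V) (P : Finset V) (A B : Finset V) : Prop :=
  A ⊆ P ∧ B ⊆ Pᶜ ∧ ∀ a ∈ A, ∀ b ∈ B, ¬ G.Adj a b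

/-- `g(G)`: the maximum of `|A|·|B|` over bipartite biindependent pairs. -/
noncomputable def gPar (G : SimpleGraph V) (P : Finset V) : ℝ :=
  sSup {x : ℝ | ∃ A B : Finset V, IsBiindep G P A B ∧ x = (A.card : ℝ) * B.card}

/-- `h(G)`: the maximum of `|A|·|B|/(|A|+|B|)` over nonempty bipartite biindependent
pairs (`sSup ∅ = 0` gives the value `0` when no such pair exists). -/
noncomputable def hPar (G : SimpleGraph V) (P : Finset V) : ℝ :=
  sSup {x : ℝ | ∃ A B : Finset V, IsBiindep G P A B ∧ (A ∪ B).Nonempty ∧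
    x = (A.card : ℝ) * B.card / ((A.card : ℝ) + B.card)}

/-- `g_bal(G)`: as `g(G)`, restricted to balanced pairs. -/
noncomputable def gBal (G : SimpleGraph V) (P : Finset V) : ℝ :=
  sSup {x : ℝ | ∃ A B : Finset V, IsBiindep G P A B ∧ A.card = B.card ∧
    x = (A.card : ℝ) * B.card}

/-- `h_bal(G)`: as `h(G)`, restricted to balanced pairs. -/
noncomputable def hBal (G : SimpleGraph V) (P : Finset V) : ℝ :=
  sSup {x : ℝ | ∃ A B : Finset V, IsBiindep G P A B ∧ A.card = B.card ∧ (A ∪ B).Nonempty ∧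
    x = (A.card : ℝ) * B.card / ((A.card : ℝ) + B.card)}

/-- `α_bal(G)`: the maximum of `|A|+|B|` over balanced bipartite biindependent pairs. -/
noncomputable def alphaBal (G : SimpleGraph V) (P : Finset V) : ℝ :=
  sSup {x : ℝ | ∃ A B : Finset V, IsBiindep G P A B ∧ A.card = B.card ∧
    x = (A.card : ℝ) + B.card}

/-- `α(G)`: the maximum size of an independent set in `G`. -/
noncomputable def alphaPar (G : SimpleGraph V) : ℝ :=
  sSup {x : ℝ | ∃ s : Finset V, (∀ a ∈ s, ∀ b ∈ s, ¬ G.Adj a b) ∧ x = (s.card : ℝ)}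


section Aux

variable (G : SimpleGraph V) (P : Finset V)

lemma biindep_empty : IsBiindep G P ∅ ∅ :=
  ⟨empty_subset _, empty_subset _, by simp⟩

lemma gSet_fin :
    {x : ℝ | ∃ A B : Finset V, IsBiindep G P A B ∧ x = (A.card : ℝ) * B.card}.Finite :=
  ((Set.finite_range fun p : Finset V × Finset V => (p.1.card : ℝ) * p.2.card)).subset
    (by rintro x ⟨A, B, -, rfl⟩; exact ⟨(A, B), rfl⟩)

lemma hSet_fin :
    {x : ℝ | ∃ A B : Finset V, IsBiindep G P A B ∧ (A ∪ B).Nonempty ∧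
      x = (A.card : ℝ) * B.card / ((A.card : ℝ) + B.card)}.Finite :=
  ((Set.finite_range fun p : Finset V × Finset V =>
      (p.1.card : ℝ) * p.2.card / ((p.1.card : ℝ) + p.2.card))).subset
    (by rintro x ⟨A, B, -, -, rfl⟩; exact ⟨(A, B), rfl⟩)

lemma abalSet_fin :
    {x : ℝ | ∃ A B : Finset V, IsBiindep G P A B ∧ A.card = B.card ∧
      x = (A.card : ℝ) + B.card}.Finite :=
  ((Set.finite_range fun p : Finset V × Finset V => (p.1.card : ℝ) + p.2.card)).subset
    (by rintro x ⟨A, B, -, -, rfl⟩; exact ⟨(A, B), rfl⟩)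

lemma aSet_fin :
    {x : ℝ | ∃ s : Finset V, (∀ a ∈ s, ∀ b ∈ s, ¬ G.Adj a b) ∧ x = (s.card : ℝ)}.Finite :=
  ((Set.finite_range fun s : Finset V => (s.card : ℝ))).subset
    (by rintro x ⟨s, -, rfl⟩; exact ⟨s, rfl⟩)

lemma alpha_nonneg : 0 ≤ alphaPar G :=
  le_csSup (aSet_fin G).bddAbove ⟨∅, by simp, by simp⟩

lemma card_le_alpha (hbip : ∀ ⦃u v⦄, G.Adj u v → (u ∈ P ↔ v ∉ P))
    {A B : Finset V} (h : IsBiindep G P A B) :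
    (A.card : ℝ) + B.card ≤ alphaPar G := by
  obtain ⟨hA, hB, hAB⟩ := h
  have hdisj : Disjoint A B :=
    Finset.disjoint_left.mpr fun a haA haB => (Finset.mem_compl.mp (hB haB)) (hA haA)
  have hind : ∀ a ∈ A ∪ B, ∀ b ∈ A ∪ B, ¬ G.Adj a b := by
    intro a ha b hb hadj
    simp only [Finset.mem_union] at ha hb
    rcases ha with ha | ha <;> rcases hb with hb | hb
    · exact (hbip hadj).mp (hA ha) (hA hb)
    · exact hAB a ha b hb hadj
    · exact hAB b hb a ha hadj.symm
    · exact (Finset.mem_compl.mp (hB ha)) ((hbip hadj).mpr (Finset.mem_compl.mp (hB hb)))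
  have hle := le_csSup (aSet_fin G).bddAbove ⟨A ∪ B, hind, rfl⟩
  rwa [Finset.card_union_of_disjoint hdisj, Nat.cast_add] at hle

lemma abal_le_alpha (hbip : ∀ ⦃u v⦄, G.Adj u v → (u ∈ P ↔ v ∉ P)) :
    alphaBal G P ≤ alphaPar G := by
  apply Real.sSup_le
  · rintro x ⟨A, B, hbi, -, rfl⟩
    exact card_le_alpha G P hbip hbi
  · exact alpha_nonneg G

lemma g_nonneg : 0 ≤ gPar G P :=
  le_csSup (gSet_fin G P).bddAbove ⟨∅, ∅, biindep_empty G P, by simp⟩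

lemma h_le_alpha (hbip : ∀ ⦃u v⦄, G.Adj u v → (u ∈ P ↔ v ∉ P)) :
    hPar G P ≤ (1/4 : ℝ) * alphaPar G := by
  apply Real.sSup_le
  · rintro x ⟨A, B, hbi, hne, rfl⟩
    have ha : (0:ℝ) ≤ A.card := Nat.cast_nonneg _
    have hb : (0:ℝ) ≤ B.card := Nat.cast_nonneg _
    have hab : (0:ℝ) < (A.card : ℝ) + B.card := by
      have h1 : 0 < (A ∪ B).card := Finset.card_pos.mpr hne
      have h2 : (A ∪ B).card ≤ A.card + B.card := Finset.card_union_le A B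
      have : 0 < A.card + B.card := lt_of_lt_of_le h1 h2
      exact_mod_cast this
    have hsum := card_le_alpha G P hbip hbi
    rw [div_le_iff₀ hab]
    nlinarith [sq_nonneg ((A.card : ℝ) - B.card)]
  · have := alpha_nonneg G; linarith

lemma g_le_alpha (hbip : ∀ ⦃u v⦄, G.Adj u v → (u ∈ P ↔ v ∉ P)) :
    gPar G P ≤ (alphaPar G)^2 / 4 := by
  apply Real.sSup_le
  · rintro x ⟨A, B, hbi, rfl⟩
    have ha : (0:ℝ) ≤ A.card := Nat.cast_nonneg _
    have hb : (0:ℝ) ≤ B.card := Nat.cast_nonneg _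
    have hsum := card_le_alpha G P hbip hbi
    nlinarith [sq_nonneg ((A.card : ℝ) - B.card)]
  · have := alpha_nonneg G; positivity

lemma sqrt_g_le_alpha (hbip : ∀ ⦃u v⦄, G.Adj u v → (u ∈ P ↔ v ∉ P)) :
    (1/2 : ℝ) * Real.sqrt (gPar G P) ≤ (1/4 : ℝ) * alphaPar G := by
  have hα := alpha_nonneg G
  have h1 : Real.sqrt (gPar G P) ≤ Real.sqrt ((alphaPar G)^2 / 4) :=
    Real.sqrt_le_sqrt (g_le_alpha G P hbip)
  have h2 : (alphaPar G)^2 / 4 = (alphaPar G / 2)^2 := by ring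
  rw [h2, Real.sqrt_sq (by linarith : (0:ℝ) ≤ alphaPar G / 2)] at h1
  linarith

lemma h_nonneg : 0 ≤ hPar G P := by
  apply Real.sSup_nonneg
  rintro x ⟨A, B, -, -, rfl⟩
  positivity

end Aux

/-- for a bipartite graph `G`, the following are equivalent:
(i) `h(G) = (1/4)·α(G)`; (ii) `(1/2)·√(g(G)) = (1/4)·α(G)`; (iii) `α(G) = α_bal(G)`. -/
theorem stmt1 (G : SimpleGraph V) (P : Finset V)
    (hbip : ∀ ⦃u v⦄, G.Adj u v → (u ∈ P ↔ v ∉ P)) :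
    (hPar G P = (1/4 : ℝ) * alphaPar G ↔
      (1/2 : ℝ) * Real.sqrt (gPar G P) = (1/4 : ℝ) * alphaPar G) ∧
    ((1/2 : ℝ) * Real.sqrt (gPar G P) = (1/4 : ℝ) * alphaPar G ↔
      alphaPar G = alphaBal G P) := by
  have hαnn := alpha_nonneg G
  -- (iii) → (ii)
  have iii_to_ii : alphaPar G = alphaBal G P →
      (1/2 : ℝ) * Real.sqrt (gPar G P) = (1/4 : ℝ) * alphaPar G := by
    intro h3
    refine le_antisymm (sqrt_g_le_alpha G P hbip) ?_
    have hne0 : {x : ℝ | ∃ A B : Finset V, IsBiindep G P A B ∧ A.card = B.card ∧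
        x = (A.card : ℝ) + B.card}.Nonempty := ⟨(0:ℝ), ∅, ∅, biindep_empty G P, rfl, by simp⟩
    have hmem := Set.Nonempty.csSup_mem hne0 (abalSet_fin G P)
    obtain ⟨A, B, hbi, hAB, hval⟩ := hmem
    have hval' : alphaBal G P = (A.card : ℝ) + B.card := hval
    have hb' : (B.card : ℝ) = (A.card : ℝ) := by exact_mod_cast hAB.symm
    have hg : ((A.card : ℝ) * B.card) ≤ gPar G P :=
      le_csSup (gSet_fin G P).bddAbove ⟨A, B, hbi, rfl⟩
    have hk : (A.card : ℝ) ≤ Real.sqrt (gPar G P) := by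
      have h2 : ((A.card : ℝ))^2 ≤ gPar G P := by
        calc ((A.card : ℝ))^2 = (A.card : ℝ) * B.card := by rw [hb']; ring
          _ ≤ gPar G P := hg
      calc (A.card : ℝ) = Real.sqrt (((A.card : ℝ))^2) :=
            (Real.sqrt_sq (Nat.cast_nonneg _)).symm
        _ ≤ Real.sqrt (gPar G P) := Real.sqrt_le_sqrt h2
    rw [h3, hval', hb']
    linarith
  -- (iii) → (i)
  have iii_to_i : alphaPar G = alphaBal G P →
      hPar G P = (1/4 : ℝ) * alphaPar G := by
    intro h3
    refine le_antisymm (h_le_alpha G P hbip) ?_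
    have hne0 : {x : ℝ | ∃ A B : Finset V, IsBiindep G P A B ∧ A.card = B.card ∧
        x = (A.card : ℝ) + B.card}.Nonempty := ⟨(0:ℝ), ∅, ∅, biindep_empty G P, rfl, by simp⟩
    have hmem := Set.Nonempty.csSup_mem hne0 (abalSet_fin G P)
    obtain ⟨A, B, hbi, hAB, hval⟩ := hmem
    have hval' : alphaBal G P = (A.card : ℝ) + B.card := hval
    have hb' : (B.card : ℝ) = (A.card : ℝ) := by exact_mod_cast hAB.symm
    by_cases hA : A.card = 0
    · have hz : alphaPar G = 0 := by
        rw [h3, hval', hb', hA]; simp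
      rw [hz]
      simpa using h_nonneg G P
    · have hApos : (0:ℝ) < A.card := by
        exact_mod_cast Nat.pos_of_ne_zero hA
      have hneA : A.Nonempty := Finset.card_pos.mp (Nat.pos_of_ne_zero hA)
      obtain ⟨v, hv⟩ := hneA
      have hne : (A ∪ B).Nonempty := ⟨v, Finset.mem_union_left _ hv⟩
      have hmem2 : ((A.card : ℝ) * B.card / ((A.card : ℝ) + B.card)) ∈
          {x : ℝ | ∃ A B : Finset V, IsBiindep G P A B ∧ (A ∪ B).Nonempty ∧
            x = (A.card : ℝ) * B.card / ((A.card : ℝ) + B.card)} := ⟨A, B, hbi, hne, rfl⟩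
      have hle2 := le_csSup (hSet_fin G P).bddAbove hmem2
      rw [h3, hval', hb']
      have heq : (A.card : ℝ) * B.card / ((A.card : ℝ) + B.card) = (A.card : ℝ) / 2 := by
        rw [hb']
        field_simp
        ring
      rw [heq] at hle2
      have hle2' : (A.card : ℝ) / 2 ≤ hPar G P := hle2
      linarith
  -- (i) → (iii)
  have i_to_iii : hPar G P = (1/4 : ℝ) * alphaPar G →
      alphaPar G = alphaBal G P := by
    intro h1
    refine le_antisymm ?_ (abal_le_alpha G P hbip)
    rcases le_or_gt (alphaPar G) 0 with hα0 | hα0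
    · calc alphaPar G ≤ 0 := hα0
        _ ≤ alphaBal G P :=
          le_csSup (abalSet_fin G P).bddAbove ⟨∅, ∅, biindep_empty G P, rfl, by simp⟩
    · have hpos : 0 < hPar G P := by rw [h1]; linarith
      have hne : {x : ℝ | ∃ A B : Finset V, IsBiindep G P A B ∧ (A ∪ B).Nonempty ∧
          x = (A.card : ℝ) * B.card / ((A.card : ℝ) + B.card)}.Nonempty := by
        by_contra hemp
        rw [Set.not_nonempty_iff_eq_empty] at hemp
        have : hPar G P = 0 := by
          unfold hPar
          rw [hemp, Real.sSup_empty]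
        rw [this] at hpos
        exact lt_irrefl _ hpos
      have hmem := Set.Nonempty.csSup_mem hne (hSet_fin G P)
      obtain ⟨A, B, hbi, hneAB, hval⟩ := hmem
      have hval' : hPar G P = (A.card : ℝ) * B.card / ((A.card : ℝ) + B.card) := hval
      have ha : (0:ℝ) ≤ A.card := Nat.cast_nonneg _
      have hb : (0:ℝ) ≤ B.card := Nat.cast_nonneg _
      have hab : (0:ℝ) < (A.card : ℝ) + B.card := by
        have h1' : 0 < (A ∪ B).card := Finset.card_pos.mpr hneAB
        have h2' : (A ∪ B).card ≤ A.card + B.card := Finset.card_union_le A B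
        have : 0 < A.card + B.card := lt_of_lt_of_le h1' h2'
        exact_mod_cast this
      have hsum := card_le_alpha G P hbip hbi
      have key : (A.card : ℝ) * B.card =
          (1/4 : ℝ) * alphaPar G * ((A.card : ℝ) + B.card) := by
        rw [← h1, hval']
        field_simp
      have hge : alphaPar G ≤ (A.card : ℝ) + B.card := by
        nlinarith [sq_nonneg ((A.card : ℝ) - B.card)]
      have heq1 : (A.card : ℝ) + B.card = alphaPar G := le_antisymm hsum hge
      have heq0 : ((A.card : ℝ) - B.card)^2 = 0 := by nlinarith
      have heqr : (A.card : ℝ) = B.card := by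
        have := pow_eq_zero_iff (n := 2) (by norm_num) |>.mp heq0
        linarith [sub_eq_zero.mp this]
      have hcardeq : A.card = B.card := by exact_mod_cast heqr
      have hle3 : (A.card : ℝ) + B.card ≤ alphaBal G P :=
        le_csSup (abalSet_fin G P).bddAbove ⟨A, B, hbi, hcardeq, rfl⟩
      linarith
  -- (ii) → (iii)
  have ii_to_iii : (1/2 : ℝ) * Real.sqrt (gPar G P) = (1/4 : ℝ) * alphaPar G →
      alphaPar G = alphaBal G P := by
    intro h2
    refine le_antisymm ?_ (abal_le_alpha G P hbip)
    rcases le_or_gt (alphaPar G) 0 with hα0 | hα0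
    · calc alphaPar G ≤ 0 := hα0
        _ ≤ alphaBal G P :=
          le_csSup (abalSet_fin G P).bddAbove ⟨∅, ∅, biindep_empty G P, rfl, by simp⟩
    · have hsq : Real.sqrt (gPar G P) = alphaPar G / 2 := by linarith
      have hgval : gPar G P = (alphaPar G)^2 / 4 := by
        have := Real.sq_sqrt (g_nonneg G P)
        rw [hsq] at this
        rw [← this]; ring
      have hne0 : {x : ℝ | ∃ A B : Finset V, IsBiindep G P A B ∧
          x = (A.card : ℝ) * B.card}.Nonempty := ⟨(0:ℝ), ∅, ∅, biindep_empty G P, by simp⟩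
      have hmem := Set.Nonempty.csSup_mem hne0 (gSet_fin G P)
      obtain ⟨A, B, hbi, hval⟩ := hmem
      have hval' : gPar G P = (A.card : ℝ) * B.card := hval
      have ha : (0:ℝ) ≤ A.card := Nat.cast_nonneg _
      have hb : (0:ℝ) ≤ B.card := Nat.cast_nonneg _
      have hsum := card_le_alpha G P hbip hbi
      have key : (A.card : ℝ) * B.card = (alphaPar G)^2 / 4 := by
        rw [← hval', hgval]
      have hge : alphaPar G ≤ (A.card : ℝ) + B.card := by
        nlinarith [sq_nonneg ((A.card : ℝ) - B.card), sq_nonneg ((A.card : ℝ) + B.card - alphaPar G)]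
      have heq1 : (A.card : ℝ) + B.card = alphaPar G := le_antisymm hsum hge
      have heq0 : ((A.card : ℝ) - B.card)^2 = 0 := by nlinarith
      have heqr : (A.card : ℝ) = B.card := by
        have := pow_eq_zero_iff (n := 2) (by norm_num) |>.mp heq0
        linarith [sub_eq_zero.mp this]
      have hcardeq : A.card = B.card := by exact_mod_cast heqr
      have hle3 : (A.card : ℝ) + B.card ≤ alphaBal G P :=
        le_csSup (abalSet_fin G P).bddAbove ⟨A, B, hbi, hcardeq, rfl⟩
      linarith
  refine ⟨⟨fun h1 => iii_to_ii (i_to_iii h1), fun h2 => iii_to_i (ii_to_iii h2)⟩,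
    ⟨ii_to_iii, iii_to_ii⟩⟩
end

section
/- Let F be the graph on vertices {1,...,6} consisting of the 6-cycle 1-2-3-4-5-6-1 together with the chords {1,4}, {2,5}, {3,6}, {2,4} (so ω(F) = 3, F has 6 vertices and 10 edges). Let G be a graph with |V(G)| = 2n (n ≥ 1) and m edges, let t be an integer with C(t,2) ≥ 9n² + n + m, and let H₀ be any graph with t vertices and C(t,2) − (9n² + n + m) edges. Then the graph H := ((G ⋈ F⁽ⁿ⁾) ⋈ K_t) ⊕ H₀ satisfies: |V(H)| = 8n + 2t, |E(H)| = (1/4)·|V(H)|·(|V(H)| − 2), and ω(H) = ω(G) + 3n + t; consequently ω(H) ≥ |V(H)|/2 if and only if ω(G) ≥ n. -/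
open Finset

/-- The disjoint union `G ⊕ H` of two graphs. -/
def gDisjUnion {α β : Type*} (G : SimpleGraph α) (H : SimpleGraph β) :
    SimpleGraph (α ⊕ β) where
  Adj x y := match x, y with
    | .inl a, .inl b => G.Adj a b
    | .inr a, .inr b => H.Adj a b
    | _, _ => False
  symm := by
    constructor
    rintro (a|a) (b|b) h
    · exact G.adj_symm h
    · exact h
    · exact h
    · exact H.adj_symm h
  loopless := by
    constructor
    rintro (a|a) h
    · exact G.loopless.irrefl a h
    · exact H.loopless.irrefl a h

/-- The join `G ⋈ H` of two graphs: disjoint union plus all edges across. -/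
def gJoin {α β : Type*} (G : SimpleGraph α) (H : SimpleGraph β) :
    SimpleGraph (α ⊕ β) where
  Adj x y := match x, y with
    | .inl a, .inl b => G.Adj a b
    | .inr a, .inr b => H.Adj a b
    | _, _ => True
  symm := by
    constructor
    rintro (a|a) (b|b) h
    · exact G.adj_symm h
    · exact trivial
    · exact trivial
    · exact H.adj_symm h
  loopless := by
    constructor
    rintro (a|a) h
    · exact G.loopless.irrefl a h
    · exact H.loopless.irrefl a h

/-- The `k`-th expansion `G⁽ᵏ⁾` of `G`: each vertex `v` is replaced by a clique `X_v`
of size `k`, with a complete bipartite graph between `X_u` and `X_v` whenever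
`{u,v}` is an edge of `G`. -/
def expansion {α : Type*} (G : SimpleGraph α) (k : ℕ) : SimpleGraph (α × Fin k) where
  Adj x y := x ≠ y ∧ (x.1 = y.1 ∨ G.Adj x.1 y.1)
  symm := ⟨fun x y h => ⟨h.1.symm, h.2.imp Eq.symm (fun ha => G.adj_symm ha)⟩⟩
  loopless := ⟨fun x h => h.1 rfl⟩

/-- The clique number `ω(G)`. -/
noncomputable def omega {α : Type*} (G : SimpleGraph α) : ℕ :=
  sSup {k : ℕ | ∃ s : Finset α, G.IsNClique k s}

/-- The graph `F` on 6 vertices: the 6-cycle `0-1-2-3-4-5-0` together with the chords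
`{0,3}, {1,4}, {2,5}, {1,3}` (with vertices `1,…,6` renamed as `0,…,5`). -/
def Fgraph : SimpleGraph (Fin 6) :=
  SimpleGraph.fromRel (fun i j =>
    (i, j) ∈ [((0 : Fin 6), (1 : Fin 6)), (1, 2), (2, 3), (3, 4), (4, 5), (5, 0),
      (0, 3), (1, 4), (2, 5), (1, 3)])

/-!
A clique of a join is the union of a clique on each side, and a clique of a disjoint union lies
on one side, so `ω` is additive under `⋈` and is the maximum under `⊕`. A clique of `G⁽ᵏ⁾`
projects onto a clique of `G` and meets each fibre `X_v` in at most `k` vertices, so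
`ω(G⁽ᵏ⁾) = k·ω(G)`. With `ω(F) = 3` and `ω(H₀) ≤ t` this gives `ω(H) = ω(G) + 3n + t`.
By the handshake lemma `|E(G⁽ᵏ⁾)| = |V(G)|·C(k,2) + k²·|E(G)|`, and `|E(H₀)|` is chosen exactly
so that `|E(H)| = 2·C(4n + t, 2)`.
-/

lemma Nat.choose_two_mul_two_add_self (n : ℕ) : n.choose 2 * 2 + n = n * n := by
  rw [Nat.choose_two_right, Nat.div_two_mul_two_of_even (Nat.even_mul_pred_self n)]
  cases n <;> simp [Nat.mul_succ]

namespace SimpleGraph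

variable {α β : Type*}

section Adjacency

variable {G : SimpleGraph α} {H : SimpleGraph β} {a a' : α} {b b' : β}

@[simp] lemma gJoin_adj_inl_inl : (gJoin G H).Adj (.inl a) (.inl a') ↔ G.Adj a a' := .rfl
@[simp] lemma gJoin_adj_inr_inr : (gJoin G H).Adj (.inr b) (.inr b') ↔ H.Adj b b' := .rfl
@[simp] lemma gJoin_adj_inl_inr : (gJoin G H).Adj (.inl a) (.inr b) := trivial
@[simp] lemma gJoin_adj_inr_inl : (gJoin G H).Adj (.inr b) (.inl a) := trivial

@[simp] lemma gDisjUnion_adj_inl_inl : (gDisjUnion G H).Adj (.inl a) (.inl a') ↔ G.Adj a a' :=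
  .rfl
@[simp] lemma gDisjUnion_adj_inr_inr : (gDisjUnion G H).Adj (.inr b) (.inr b') ↔ H.Adj b b' :=
  .rfl
@[simp] lemma not_gDisjUnion_adj_inl_inr : ¬(gDisjUnion G H).Adj (.inl a) (.inr b) := id
@[simp] lemma not_gDisjUnion_adj_inr_inl : ¬(gDisjUnion G H).Adj (.inr b) (.inl a) := id

end Adjacency

section CliqueNum

lemma omega_eq_cliqueNum (G : SimpleGraph α) : omega G = G.cliqueNum := rfl

lemma cliqueNum_le_of_forall_card_le {G : SimpleGraph α} {c : ℕ}
    (h : ∀ s : Finset α, G.IsClique (s : Set α) → #s ≤ c) : G.cliqueNum ≤ c := by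
  obtain ⟨s, hs⟩ := G.exists_isNClique_cliqueNum
  exact hs.card_eq ▸ h s hs.isClique

lemma cliqueNum_le_card [Fintype α] (G : SimpleGraph α) : G.cliqueNum ≤ Fintype.card α :=
  cliqueNum_le_of_forall_card_le fun s _ => s.card_le_univ

@[simp]
lemma cliqueNum_top [Fintype α] : (⊤ : SimpleGraph α).cliqueNum = Fintype.card α :=
  (cliqueNum_le_card _).antisymm
    (IsClique.card_le_cliqueNum (t := Finset.univ) (tc := IsClique.top _))

variable {G : SimpleGraph α} {H : SimpleGraph β}

lemma isClique_gJoin_iff {s : Finset (α ⊕ β)} :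
    (gJoin G H).IsClique (s : Set (α ⊕ β)) ↔
      G.IsClique (s.toLeft : Set α) ∧ H.IsClique (s.toRight : Set β) := by
  refine ⟨fun h => ⟨fun a ha b hb hab => ?_, fun a ha b hb hab => ?_⟩, fun ⟨hG, hH⟩ => ?_⟩
  · exact h (by simpa using ha) (by simpa using hb) (by simpa using hab)
  · exact h (by simpa using ha) (by simpa using hb) (by simpa using hab)
  · rintro (a | b) hx (c | d) hy hne
    · exact hG (by simpa using hx) (by simpa using hy) (by simpa using hne)
    · trivial
    · trivial
    · exact hH (by simpa using hx) (by simpa using hy) (by simpa using hne)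

lemma cliqueNum_gJoin [Finite α] [Finite β] :
    (gJoin G H).cliqueNum = G.cliqueNum + H.cliqueNum := by
  refine le_antisymm (cliqueNum_le_of_forall_card_le fun s hs => ?_) ?_
  · rw [isClique_gJoin_iff] at hs
    rw [← s.card_toLeft_add_card_toRight]
    exact add_le_add hs.1.card_le_cliqueNum hs.2.card_le_cliqueNum
  · obtain ⟨s, hs⟩ := G.exists_isNClique_cliqueNum
    obtain ⟨t, ht⟩ := H.exists_isNClique_cliqueNum
    have hst : (gJoin G H).IsClique (s.disjSum t : Set (α ⊕ β)) := by
      rw [isClique_gJoin_iff, toLeft_disjSum, toRight_disjSum]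
      exact ⟨hs.isClique, ht.isClique⟩
    simpa [hs.card_eq, ht.card_eq] using hst.card_le_cliqueNum

lemma isClique_gDisjUnion_iff {s : Finset (α ⊕ β)} :
    (gDisjUnion G H).IsClique (s : Set (α ⊕ β)) ↔
      (s.toRight = ∅ ∧ G.IsClique (s.toLeft : Set α)) ∨
        (s.toLeft = ∅ ∧ H.IsClique (s.toRight : Set β)) := by
  constructor
  · intro h
    have hG : G.IsClique (s.toLeft : Set α) := fun a ha b hb hab => by
      exact h (by simpa using ha) (by simpa using hb) (by simpa using hab)
    have hH : H.IsClique (s.toRight : Set β) := fun a ha b hb hab => by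
      exact h (by simpa using ha) (by simpa using hb) (by simpa using hab)
    rcases s.toLeft.eq_empty_or_nonempty with hl | ⟨a, ha⟩
    · exact .inr ⟨hl, hH⟩
    · refine .inl ⟨eq_empty_of_forall_notMem fun b hb => ?_, hG⟩
      exact False.elim (h (by simpa using ha) (by simpa using hb) Sum.inl_ne_inr)
  · rintro (⟨hr, hG⟩ | ⟨hl, hH⟩) (a | b) hx (c | d) hy hne
    · exact hG (by simpa using hx) (by simpa using hy) (by simpa using hne)
    all_goals first
      | exact hH (by simpa using hx) (by simpa using hy) (by simpa using hne)
      | simp_all [← mem_toLeft, ← mem_toRight]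

lemma cliqueNum_gDisjUnion [Finite α] [Finite β] :
    (gDisjUnion G H).cliqueNum = max G.cliqueNum H.cliqueNum := by
  refine le_antisymm (cliqueNum_le_of_forall_card_le fun s hs => ?_) (max_le ?_ ?_)
  · rw [← s.card_toLeft_add_card_toRight]
    rcases isClique_gDisjUnion_iff.1 hs with ⟨hr, hG⟩ | ⟨hl, hH⟩
    · simpa [hr] using le_max_of_le_left hG.card_le_cliqueNum
    · simpa [hl] using le_max_of_le_right hH.card_le_cliqueNum
  · obtain ⟨s, hs⟩ := G.exists_isNClique_cliqueNum
    have hs' : (gDisjUnion G H).IsClique (s.disjSum (∅ : Finset β) : Set (α ⊕ β)) :=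
      isClique_gDisjUnion_iff.2 (.inl ⟨toRight_disjSum, by rw [toLeft_disjSum]; exact hs.isClique⟩)
    simpa [hs.card_eq] using hs'.card_le_cliqueNum
  · obtain ⟨t, ht⟩ := H.exists_isNClique_cliqueNum
    have ht' : (gDisjUnion G H).IsClique ((∅ : Finset α).disjSum t : Set (α ⊕ β)) :=
      isClique_gDisjUnion_iff.2 (.inr ⟨toLeft_disjSum, by rw [toRight_disjSum]; exact ht.isClique⟩)
    simpa [ht.card_eq] using ht'.card_le_cliqueNum

end CliqueNum

section EdgeCount

lemma two_mul_card_edgeSet [Fintype α] (G : SimpleGraph α) :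
    2 * Nat.card G.edgeSet = ∑ v, Nat.card {w // G.Adj v w} := by
  classical
  rw [Nat.card_eq_fintype_card, ← edgeFinset_card, ← sum_degrees_eq_twice_card_edges]
  simp only [← card_neighborSet_eq_degree, Nat.card_eq_fintype_card]
  rfl

variable [Fintype α] [Fintype β]

lemma card_edgeSet_top :
    Nat.card (⊤ : SimpleGraph α).edgeSet = (Fintype.card α).choose 2 := by
  classical
  rw [Nat.card_eq_fintype_card, ← edgeFinset_card, card_edgeFinset_top_eq_card_choose_two]

lemma two_mul_card_edgeSet_sum_type (K : SimpleGraph (α ⊕ β)) :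
    2 * Nat.card K.edgeSet =
      ∑ x, (Nat.card {a // K.Adj x (.inl a)} + Nat.card {b // K.Adj x (.inr b)}) := by
  rw [two_mul_card_edgeSet]
  refine sum_congr rfl fun x _ => ?_
  rw [Nat.card_congr (Equiv.subtypeSum (p := K.Adj x)), Nat.card_sum]

variable (G : SimpleGraph α) (H : SimpleGraph β)

lemma card_edgeSet_gJoin :
    Nat.card (gJoin G H).edgeSet =
      Nat.card G.edgeSet + Nat.card H.edgeSet + Fintype.card α * Fintype.card β := by
  have h := two_mul_card_edgeSet_sum_type (gJoin G H)
  simp only [Fintype.sum_sum_type, sum_add_distrib, gJoin_adj_inl_inl, gJoin_adj_inr_inr,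
    gJoin_adj_inl_inr, gJoin_adj_inr_inl, ← two_mul_card_edgeSet, Nat.card_eq_fintype_card,
    Fintype.card_subtype_true, sum_const, card_univ, smul_eq_mul] at h ⊢
  linarith

lemma card_edgeSet_gDisjUnion :
    Nat.card (gDisjUnion G H).edgeSet = Nat.card G.edgeSet + Nat.card H.edgeSet := by
  have h := two_mul_card_edgeSet_sum_type (gDisjUnion G H)
  simp only [Fintype.sum_sum_type, sum_add_distrib, gDisjUnion_adj_inl_inl,
    gDisjUnion_adj_inr_inr, not_gDisjUnion_adj_inl_inr, not_gDisjUnion_adj_inr_inl,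
    ← two_mul_card_edgeSet, Nat.card_of_isEmpty, sum_const_zero, add_zero, zero_add] at h ⊢
  omega

end EdgeCount

section Expansion

variable {G : SimpleGraph α} {k : ℕ}

lemma expansion_adj {x y : α × Fin k} :
    (expansion G k).Adj x y ↔ x ≠ y ∧ (x.1 = y.1 ∨ G.Adj x.1 y.1) := .rfl

lemma IsClique.image_fst_of_expansion [DecidableEq α] {s : Finset (α × Fin k)}
    (hs : (expansion G k).IsClique (s : Set (α × Fin k))) :
    G.IsClique (s.image Prod.fst : Set α) := by
  simp only [coe_image]
  rintro _ ⟨x, hx, rfl⟩ _ ⟨y, hy, rfl⟩ hxy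
  exact (hs hx hy fun h => hxy (congrArg Prod.fst h)).2.resolve_left hxy

lemma IsClique.product_univ_expansion {s : Finset α} (hs : G.IsClique (s : Set α)) :
    (expansion G k).IsClique ((s ×ˢ univ : Finset (α × Fin k)) : Set (α × Fin k)) := by
  rintro ⟨a, i⟩ hx ⟨b, j⟩ hy hne
  refine ⟨hne, or_iff_not_imp_left.2 fun hab => hs ?_ ?_ hab⟩
  · simpa using hx
  · simpa using hy

lemma cliqueNum_expansion [Finite α] : (expansion G k).cliqueNum = G.cliqueNum * k := by
  classical
  refine le_antisymm (cliqueNum_le_of_forall_card_le fun s hs => ?_) ?_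
  · calc #s ≤ #(s.image Prod.fst ×ˢ (univ : Finset (Fin k))) :=
          card_le_card fun x hx => mem_product.2 ⟨mem_image_of_mem _ hx, mem_univ _⟩
      _ = #(s.image Prod.fst) * k := by rw [card_product, card_univ, Fintype.card_fin]
      _ ≤ G.cliqueNum * k := Nat.mul_le_mul_right k hs.image_fst_of_expansion.card_le_cliqueNum
  · obtain ⟨s, hs⟩ := G.exists_isNClique_cliqueNum
    simpa [hs.card_eq] using hs.isClique.product_univ_expansion (k := k) |>.card_le_cliqueNum

lemma card_adj_expansion [Finite α] (v : α) (i : Fin k) :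
    Nat.card {y // (expansion G k).Adj (v, i) y} = (k - 1) + Nat.card {w // G.Adj v w} * k := by
  have hS : {y | (expansion G k).Adj (v, i) y} =
      ({v} ×ˢ {i}ᶜ : Set (α × Fin k)) ∪ {w | G.Adj v w} ×ˢ Set.univ := by
    ext ⟨w, j⟩
    rcases eq_or_ne w v with rfl | hwv
    · simp [expansion_adj, eq_comm]
    · simp [expansion_adj, hwv, hwv.symm]
  have hdisj : Disjoint ({v} ×ˢ {i}ᶜ : Set (α × Fin k)) ({w | G.Adj v w} ×ˢ Set.univ) := by
    simp +contextual [Set.disjoint_left]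
  rw [← Set.coe_ofPred, Nat.card_coe_set_eq, hS, Set.ncard_union_eq hdisj, Set.ncard_prod,
    Set.ncard_prod, Set.ncard_singleton, Set.ncard_compl, Set.ncard_singleton, Set.ncard_univ,
    ← Nat.card_coe_set_eq, one_mul, Nat.card_fin]
  rfl

lemma card_edgeSet_expansion [Fintype α] :
    Nat.card (expansion G k).edgeSet =
      Fintype.card α * k.choose 2 + k ^ 2 * Nat.card G.edgeSet := by
  have h := two_mul_card_edgeSet (expansion G k)
  rw [Fintype.sum_prod_type] at h
  simp only [card_adj_expansion, sum_add_distrib, sum_const, card_univ,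
    Fintype.card_fin, smul_eq_mul, ← mul_sum, ← sum_mul] at h
  rw [← two_mul_card_edgeSet] at h
  have hk : k.choose 2 * 2 = k * (k - 1) := by
    rw [Nat.choose_two_right, Nat.div_two_mul_two_of_even (Nat.even_mul_pred_self k)]
  rw [← hk] at h
  linarith

end Expansion

instance : DecidableRel Fgraph.Adj := fun v w =>
  decidable_of_iff' _ (fromRel_adj _ v w)

lemma cliqueNum_Fgraph : Fgraph.cliqueNum = 3 := by
  refine le_antisymm (cliqueNum_le_of_forall_card_le (by decide)) ?_
  exact IsClique.card_le_cliqueNum (G := Fgraph) (t := {1, 2, 3}) (tc := by decide)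

lemma card_edgeSet_Fgraph : Nat.card Fgraph.edgeSet = 10 := by
  rw [Nat.card_eq_fintype_card, ← edgeFinset_card]
  decide

end SimpleGraph

open SimpleGraph

theorem stmt3_general {α β : Type*} [Fintype α] [Fintype β]
    (n : ℕ) (G : SimpleGraph α) (hcard : Fintype.card α = 2 * n)
    (m : ℕ) (hm : Nat.card G.edgeSet = m)
    (t : ℕ) (ht : 9 * n ^ 2 + n + m ≤ t.choose 2)
    (H₀ : SimpleGraph β) (hβ : Fintype.card β = t)
    (hE₀ : Nat.card H₀.edgeSet = t.choose 2 - (9 * n ^ 2 + n + m)) :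
    let H := gDisjUnion (gJoin (gJoin G (expansion Fgraph n)) (⊤ : SimpleGraph (Fin t))) H₀
    Fintype.card (((α ⊕ Fin 6 × Fin n) ⊕ Fin t) ⊕ β) = 8 * n + 2 * t ∧
    4 * Nat.card H.edgeSet =
      Fintype.card (((α ⊕ Fin 6 × Fin n) ⊕ Fin t) ⊕ β) *
        (Fintype.card (((α ⊕ Fin 6 × Fin n) ⊕ Fin t) ⊕ β) - 2) ∧
    omega H = omega G + 3 * n + t ∧
    (4 * n + t ≤ omega H ↔ n ≤ omega G) := by
  intro H
  have hV : Fintype.card (((α ⊕ Fin 6 × Fin n) ⊕ Fin t) ⊕ β) = 8 * n + 2 * t := by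
    simp only [Fintype.card_sum, Fintype.card_prod, Fintype.card_fin, hcard, hβ]
    ring
  have hω : omega H = omega G + 3 * n + t := by
    have hH₀ := H₀.cliqueNum_le_card
    simp only [H, omega_eq_cliqueNum, cliqueNum_gDisjUnion, cliqueNum_gJoin, cliqueNum_expansion,
      cliqueNum_Fgraph, cliqueNum_top, Fintype.card_fin]
    omega
  have hE : 4 * Nat.card H.edgeSet + 2 * (8 * n + 2 * t) = (8 * n + 2 * t) * (8 * n + 2 * t) := by
    have hE₀' : Nat.card H₀.edgeSet + (9 * n ^ 2 + n + m) = t.choose 2 := by omega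
    simp only [H, card_edgeSet_gDisjUnion, card_edgeSet_gJoin, card_edgeSet_expansion,
      card_edgeSet_Fgraph, card_edgeSet_top, Fintype.card_sum, Fintype.card_prod,
      Fintype.card_fin, hcard, hm]
    linarith [Nat.choose_two_mul_two_add_self n, Nat.choose_two_mul_two_add_self t]
  refine ⟨hV, ?_, hω, by omega⟩
  rw [hV, Nat.mul_sub]
  omega

/-- for `G` with `|V(G)| = 2n` and `m` edges, `t` with `C(t,2) ≥ 9n² + n + m`,
and `H₀` with `t` vertices and `C(t,2) − (9n² + n + m)` edges, the graph
`H := ((G ⋈ F⁽ⁿ⁾) ⋈ K_t) ⊕ H₀` satisfies `|V(H)| = 8n + 2t`,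
`|E(H)| = (1/4)·|V(H)|·(|V(H)| − 2)`, `ω(H) = ω(G) + 3n + t`, and consequently
`ω(H) ≥ |V(H)|/2 ↔ ω(G) ≥ n`. -/
theorem stmt3 {α β : Type*} [Fintype α] [Fintype β]
    (n : ℕ) (hn : 1 ≤ n) (G : SimpleGraph α) (hcard : Fintype.card α = 2 * n)
    (m : ℕ) (hm : Nat.card G.edgeSet = m)
    (t : ℕ) (ht : 9 * n ^ 2 + n + m ≤ t.choose 2)
    (H₀ : SimpleGraph β) (hβ : Fintype.card β = t)
    (hE₀ : Nat.card H₀.edgeSet = t.choose 2 - (9 * n ^ 2 + n + m)) :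
    let H := gDisjUnion (gJoin (gJoin G (expansion Fgraph n)) (⊤ : SimpleGraph (Fin t))) H₀
    Fintype.card (((α ⊕ Fin 6 × Fin n) ⊕ Fin t) ⊕ β) = 8 * n + 2 * t ∧
    4 * Nat.card H.edgeSet =
      Fintype.card (((α ⊕ Fin 6 × Fin n) ⊕ Fin t) ⊕ β) *
        (Fintype.card (((α ⊕ Fin 6 × Fin n) ⊕ Fin t) ⊕ β) - 2) ∧
    omega H = omega G + 3 * n + t ∧
    (4 * n + t ≤ omega H ↔ n ≤ omega G) :=
  stmt3_general n G hcard m hm t ht H₀ hβ hE₀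
end

section
/- Let G be a bipartite regular graph with adjacency matrix A_G. Define ĥ(G) := max{⟨C,X⟩ : X ⪰ 0, Tr(X) = 1, ⟨A_G,X⟩ = 0} and ĥ'(G) := max{⟨C,X⟩ : [[1, xᵀ],[x, X]] ⪰ 0, Tr(X) = 1, eᵀx = 1, ⟨A_G,X⟩ = 0}, where the maxima are over symmetric V×V matrices X (and vectors x ∈ ℝ^V for ĥ'). Then ĥ(G) = ĥ'(G). -/
open Finset Matrix

variable {V : Type*} [Fintype V] [DecidableEq V]

/-- The trace inner product `⟨A,B⟩ = ∑_{i,j} A_{ij} B_{ij}` of two matrices. -/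
noncomputable def ip (A B : Matrix V V ℝ) : ℝ := ∑ i, ∑ j, A i j * B i j

/-- The matrix `C` associated to the bipartition `(P, Pᶜ)`: entry `1/2` whenever the two
indices lie on opposite sides of the bipartition, and `0` otherwise. -/
noncomputable def Cmat (P : Finset V) : Matrix V V ℝ :=
  Matrix.of fun i j => if (i ∈ P ↔ j ∈ P) then 0 else 1/2

/-- The `(1+|V|)×(1+|V|)` block matrix `[[1, xᵀ],[x, X]]`. -/
noncomputable def dblk (x : V → ℝ) (X : Matrix V V ℝ) : Matrix (Unit ⊕ V) (Unit ⊕ V) ℝ :=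
  Matrix.fromBlocks 1 (Matrix.of fun _ j => x j) (Matrix.of fun i _ => x i) X

/-- The semidefinite programming bound `h₁(G)` for a bipartite graph `G` with
bipartition `(P, Pᶜ)`. -/
noncomputable def h1 (G : SimpleGraph V) (P : Finset V) : ℝ :=
  sSup {x : ℝ | ∃ X : Matrix V V ℝ, X.PosSemidef ∧ X.trace = 1 ∧
    (∀ i j, G.Adj i j → X i j = 0) ∧ x = ip (Cmat P) X}

/-- The semidefinite programming bound `g₁(G)` for a bipartite graph `G` with
bipartition `(P, Pᶜ)`. -/
noncomputable def g1 (G : SimpleGraph V) (P : Finset V) : ℝ :=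
  sSup {x : ℝ | ∃ X : Matrix V V ℝ, (dblk (fun i => X i i) X).PosSemidef ∧
    (∀ i j, G.Adj i j → X i j = 0) ∧ x = ip (Cmat P) X}

/-- The adjacency matrix of a graph is Hermitian (over `ℝ`). -/
lemma adjHerm (G : SimpleGraph V) [DecidableRel G.Adj] : (G.adjMatrix ℝ).IsHermitian := by
  rw [Matrix.IsHermitian, Matrix.conjTranspose_eq_transpose_of_trivial]
  exact G.isSymm_adjMatrix

/-- The list of eigenvalues of a Hermitian matrix, with multiplicities,
sorted in nondecreasing order. -/
noncomputable def eigList (A : Matrix V V ℝ) (hA : A.IsHermitian) : List ℝ :=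
  (Finset.univ.val.map hA.eigenvalues).sort (· ≤ ·)

/-- The second largest eigenvalue (with multiplicities) of a Hermitian matrix. -/
noncomputable def secondLargest (A : Matrix V V ℝ) (hA : A.IsHermitian) : ℝ :=
  (eigList A hA).getD (Fintype.card V - 2) 0

/-- The smallest eigenvalue of a Hermitian matrix. -/
noncomputable def smallestEig (A : Matrix V V ℝ) (hA : A.IsHermitian) : ℝ :=
  (eigList A hA).getD 0 0

/-- A graph is edge-transitive if its automorphism group acts transitively on edges. -/
def EdgeTransitive (G : SimpleGraph V) : Prop :=
  ∀ e f : G.edgeSet, ∃ φ : G ≃g G, φ.mapEdgeSet e = f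

/-- A graph is vertex-transitive if its automorphism group acts transitively on vertices. -/
def VertexTransitive (G : SimpleGraph V) : Prop :=
  ∀ u v : V, ∃ φ : G ≃g G, φ u = v

/-- `ĥ(G) = max{⟨C,X⟩ : X ⪰ 0, Tr(X) = 1, ⟨A_G,X⟩ = 0}`. -/
noncomputable def hhatSdp (G : SimpleGraph V) [DecidableRel G.Adj] (P : Finset V) : ℝ :=
  sSup {x : ℝ | ∃ X : Matrix V V ℝ, X.PosSemidef ∧ X.trace = 1 ∧
    ip (G.adjMatrix ℝ) X = 0 ∧ x = ip (Cmat P) X}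

/-- `ĥ'(G) = max{⟨C,X⟩ : [[1,xᵀ],[x,X]] ⪰ 0, Tr(X) = 1, eᵀx = 1, ⟨A_G,X⟩ = 0}`. -/
noncomputable def hhatSdp' (G : SimpleGraph V) [DecidableRel G.Adj] (P : Finset V) : ℝ :=
  sSup {c : ℝ | ∃ (X : Matrix V V ℝ) (x : V → ℝ), (dblk x X).PosSemidef ∧ X.trace = 1 ∧
    (∑ i, x i) = 1 ∧ ip (G.adjMatrix ℝ) X = 0 ∧ c = ip (Cmat P) X}

/-!
Every value of `ĥ'` is a value of `ĥ`, because `[[1, xᵀ], [x, X]] ⪰ 0` means `X ⪰ xxᵀ ⪰ 0`.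
Conversely, a feasible `X` for `ĥ` with `β = eᵀXe ≥ 1` is feasible for `ĥ'` with `x = Xe/β`:
Cauchy–Schwarz for the form of `X` gives `(vᵀXe)² ≤ β · vᵀXv`, so `X - xxᵀ ⪰ 0`. If `β < 1`, then
`C = (eeᵀ - ssᵀ)/4` for the sign vector `s` of the bipartition, so `⟨C,X⟩ ≤ β/4 < 1/2`. This is
beaten by the value `1/2` of `ĥ'` at `X = wwᵀ`, `w = (e_u + e_v)/√2` for a non-edge `uv` across the
bipartition, unless `G` is complete bipartite; then `C = A_G/2` and every value of `ĥ` is `0`.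
-/

namespace Matrix.PosSemidef

variable {n : Type*} [Fintype n] {X : Matrix n n ℝ}

lemma dotProduct_mulVec_comm (hX : X.PosSemidef) (u v : n → ℝ) :
    u ⬝ᵥ X *ᵥ v = v ⬝ᵥ X *ᵥ u := by
  have hXt : Xᵀ = X := by simpa [IsHermitian, conjTranspose_eq_transpose_of_trivial] using hX.1
  rw [dotProduct_mulVec, dotProduct_comm, ← mulVec_transpose, hXt]

lemma sq_dotProduct_mulVec_le (hX : X.PosSemidef) (u v : n → ℝ) :
    (u ⬝ᵥ X *ᵥ v) ^ 2 ≤ (u ⬝ᵥ X *ᵥ u) * (v ⬝ᵥ X *ᵥ v) := by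
  have hquad : ∀ t : ℝ, 0 ≤ (u ⬝ᵥ X *ᵥ u) * (t * t) + 2 * (u ⬝ᵥ X *ᵥ v) * t + v ⬝ᵥ X *ᵥ v := by
    intro t
    have h := hX.dotProduct_mulVec_nonneg (t • u + v)
    simp only [star_trivial, mulVec_add, mulVec_smul, dotProduct_add, add_dotProduct,
      dotProduct_smul, smul_dotProduct, smul_eq_mul, dotProduct_mulVec_comm hX v u] at h
    linarith
  have := discrim_le_zero hquad
  rw [discrim] at this
  linarith

lemma sub_vecMulVec_posSemidef (hX : X.PosSemidef) (u : n → ℝ) (hu : 1 ≤ u ⬝ᵥ X *ᵥ u) :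
    (X - vecMulVec ((u ⬝ᵥ X *ᵥ u)⁻¹ • X *ᵥ u) ((u ⬝ᵥ X *ᵥ u)⁻¹ • X *ᵥ u)).PosSemidef := by
  set β := u ⬝ᵥ X *ᵥ u
  set x := β⁻¹ • X *ᵥ u
  have hxx : (vecMulVec x x).PosSemidef := by simpa using posSemidef_vecMulVec_self_star x
  refine .of_dotProduct_mulVec_nonneg (hX.1.sub hxx.1) fun v => ?_
  have hv : 0 ≤ v ⬝ᵥ X *ᵥ v := by simpa using hX.dotProduct_mulVec_nonneg v
  have hCS := hX.sq_dotProduct_mulVec_le u v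
  have hvx : v ⬝ᵥ x = β⁻¹ * (u ⬝ᵥ X *ᵥ v) := by
    rw [dotProduct_smul, smul_eq_mul, ← dotProduct_mulVec_comm hX]
  have hform : v ⬝ᵥ (X - vecMulVec x x) *ᵥ v = v ⬝ᵥ X *ᵥ v - (v ⬝ᵥ x) ^ 2 := by
    simp only [sub_mulVec, dotProduct_sub, vecMulVec_mulVec]
    rw [op_smul_eq_smul, dotProduct_smul, smul_eq_mul, dotProduct_comm x v, sq]
  rw [star_trivial, hform, hvx, sub_nonneg]
  have hβ : 0 < β := by linarith
  calc (β⁻¹ * (u ⬝ᵥ X *ᵥ v)) ^ 2 = (u ⬝ᵥ X *ᵥ v) ^ 2 / β / β := by field_simp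
    _ ≤ β * (v ⬝ᵥ X *ᵥ v) / β / β := by gcongr
    _ ≤ v ⬝ᵥ X *ᵥ v := by
      rw [mul_div_cancel_left₀ _ hβ.ne']
      exact div_le_self hv hu

end Matrix.PosSemidef

section

variable {n : Type*} [Fintype n]

lemma dblk_posSemidef_iff (x : n → ℝ) (X : Matrix n n ℝ) :
    (dblk x X).PosSemidef ↔ (X - vecMulVec x x).PosSemidef := by
  have hB : (of fun i (_ : Unit) => x i) = (of fun (_ : Unit) j => x j)ᴴ := by
    ext; simp
  have hBB : (of fun (_ : Unit) j => x j)ᴴ * (of fun (_ : Unit) j => x j) = vecMulVec x x := by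
    ext; simp [mul_apply, vecMulVec]
  have : Invertible (1 : Matrix Unit Unit ℝ) := invertibleOne
  rw [dblk, hB, PosDef.fromBlocks₁₁ _ _ PosDef.one, inv_one, Matrix.mul_one, hBB]

lemma ip_smul_left (c : ℝ) (A X : Matrix n n ℝ) : ip (c • A) X = c * ip A X := by
  simp only [ip, Matrix.smul_apply, smul_eq_mul, mul_sum, mul_assoc]

lemma ip_vecMulVec (A : Matrix n n ℝ) (w : n → ℝ) : ip A (vecMulVec w w) = w ⬝ᵥ A *ᵥ w := by
  simp only [ip, vecMulVec_apply, dotProduct, mulVec, mul_sum]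
  exact sum_congr rfl fun i _ => sum_congr rfl fun j _ => by ring

lemma single_add_single_dotProduct_mulVec [DecidableEq n] (M : Matrix n n ℝ) (u v : n) (a : ℝ) :
    (Pi.single u a + Pi.single v a) ⬝ᵥ M *ᵥ (Pi.single u a + Pi.single v a) =
      a ^ 2 * (M u u + M u v + M v u + M v v) := by
  simp only [mulVec_add, mulVec_single, add_dotProduct, dotProduct_add, single_dotProduct,
    Pi.smul_apply, col_apply, MulOpposite.smul_eq_mul_unop, MulOpposite.unop_op]
  ring

end

lemma Cmat_eq_half_adjMatrix {n : Type*} [DecidableEq n] {G : SimpleGraph n} [DecidableRel G.Adj]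
    {P : Finset n} (hbip : ∀ ⦃u v⦄, G.Adj u v → (u ∈ P ↔ v ∉ P))
    (hcomplete : ∀ u v, (u ∈ P ↔ v ∉ P) → G.Adj u v) :
    Cmat P = (1 / 2 : ℝ) • G.adjMatrix ℝ := by
  ext u v
  by_cases huv : u ∈ P ↔ v ∉ P
  · simp [Cmat, hcomplete u v huv, huv]
  · have hnadj : ¬ G.Adj u v := fun h => huv (hbip h)
    have hsame : u ∈ P ↔ v ∈ P := by tauto
    simp [Cmat, hnadj, hsame]

lemma ip_Cmat_le (P : Finset V) {X : Matrix V V ℝ} (hX : X.PosSemidef) :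
    ip (Cmat P) X ≤ (1 ⬝ᵥ X *ᵥ 1) / 4 := by
  set s : V → ℝ := fun i => if i ∈ P then 1 else -1
  have hs := hX.dotProduct_mulVec_nonneg s
  have key : ip (Cmat P) X = (1 ⬝ᵥ X *ᵥ 1 - s ⬝ᵥ X *ᵥ s) / 4 := by
    simp only [ip, dotProduct, mulVec, Pi.one_apply, one_mul, mul_sum, ← sum_sub_distrib, sum_div]
    refine sum_congr rfl fun i _ => sum_congr rfl fun j _ => ?_
    by_cases hi : i ∈ P <;> by_cases hj : j ∈ P <;> simp [Cmat, s, hi, hj] <;> ring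
  rw [star_trivial] at hs
  linarith

section FeasibleValues

variable (G : SimpleGraph V) [DecidableRel G.Adj] (P : Finset V)

def hhatValues : Set ℝ :=
  {x : ℝ | ∃ X : Matrix V V ℝ, X.PosSemidef ∧ X.trace = 1 ∧
    ip (G.adjMatrix ℝ) X = 0 ∧ x = ip (Cmat P) X}

def hhatValues' : Set ℝ :=
  {c : ℝ | ∃ (X : Matrix V V ℝ) (x : V → ℝ), (dblk x X).PosSemidef ∧ X.trace = 1 ∧
    (∑ i, x i) = 1 ∧ ip (G.adjMatrix ℝ) X = 0 ∧ c = ip (Cmat P) X}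

lemma hhatSdp_eq_sSup : hhatSdp G P = sSup (hhatValues G P) := rfl

lemma hhatSdp'_eq_sSup : hhatSdp' G P = sSup (hhatValues' G P) := rfl

variable {G P}

lemma hhatValues'_subset : hhatValues' G P ⊆ hhatValues G P := by
  rintro c ⟨X, x, hblk, htr, -, hA, rfl⟩
  refine ⟨X, ?_, htr, hA, rfl⟩
  simpa using ((dblk_posSemidef_iff x X).mp hblk).add (posSemidef_vecMulVec_self_star x)

lemma ip_Cmat_mem_hhatValues' {X : Matrix V V ℝ} (hX : X.PosSemidef) (htr : X.trace = 1)
    (hA : ip (G.adjMatrix ℝ) X = 0) (hβ : 1 ≤ 1 ⬝ᵥ X *ᵥ 1) : ip (Cmat P) X ∈ hhatValues' G P := by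
  refine ⟨X, (1 ⬝ᵥ X *ᵥ 1)⁻¹ • X *ᵥ 1, ?_, htr, ?_, hA, rfl⟩
  · rw [dblk_posSemidef_iff]
    exact hX.sub_vecMulVec_posSemidef 1 hβ
  · rw [← one_dotProduct, dotProduct_smul, smul_eq_mul, inv_mul_cancel₀ (by linarith)]

lemma quadForm_Cmat_mem_hhatValues' (w : V → ℝ) (hw : w ⬝ᵥ w = 1) (hsum : 1 ≤ (∑ i, w i) ^ 2)
    (hA : w ⬝ᵥ G.adjMatrix ℝ *ᵥ w = 0) : w ⬝ᵥ Cmat P *ᵥ w ∈ hhatValues' G P := by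
  rw [← ip_vecMulVec]
  refine ip_Cmat_mem_hhatValues' (by simpa using posSemidef_vecMulVec_self_star w)
    (by rw [trace_vecMulVec, hw]) (by rw [ip_vecMulVec, hA]) ?_
  simpa [vecMulVec_mulVec, one_dotProduct, dotProduct_one, sq] using hsum

end FeasibleValues

variable {G : SimpleGraph V} [DecidableRel G.Adj] {P : Finset V}

lemma zero_mem_hhatValues' (u : V) : 0 ∈ hhatValues' G P := by
  have h := quadForm_Cmat_mem_hhatValues' (G := G) (P := P) (Pi.single u 1) (by simp) (by simp)
    (by simp)
  simpa [Cmat] using h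

lemma half_mem_hhatValues' {u v : V} (huv : u ∈ P ↔ v ∉ P) (hadj : ¬ G.Adj u v) :
    1 / 2 ∈ hhatValues' G P := by
  have hne : u ≠ v := by rintro rfl; simp at huv
  set a := √(1 / 2)
  have ha : a ^ 2 = 1 / 2 := Real.sq_sqrt (by norm_num)
  have h := quadForm_Cmat_mem_hhatValues' (G := G) (P := P) (Pi.single u a + Pi.single v a)
    ?_ ?_ ?_
  · have hC : Cmat P u v = 1 / 2 ∧ Cmat P v u = 1 / 2 := by simp [Cmat, huv]
    rw [single_add_single_dotProduct_mulVec, hC.1, hC.2, ha] at h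
    convert h using 1
    norm_num [Cmat]
  · have h1 := single_add_single_dotProduct_mulVec 1 u v a
    rw [one_mulVec] at h1
    rw [h1, ha]
    norm_num [one_apply, hne, hne.symm]
  · simp only [Pi.add_apply, sum_add_distrib, Finset.sum_pi_single', mem_univ, if_true]
    nlinarith [ha]
  · have hadj' : ¬ G.Adj v u := fun h => hadj h.symm
    rw [single_add_single_dotProduct_mulVec]
    simp [hadj, hadj']

theorem stmt10_general (G : SimpleGraph V) [DecidableRel G.Adj] (P : Finset V)
    (hbip : ∀ ⦃u v⦄, G.Adj u v → (u ∈ P ↔ v ∉ P)) :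
    hhatSdp G P = hhatSdp' G P := by
  rw [hhatSdp_eq_sSup, hhatSdp'_eq_sSup]
  refine csSup_eq_csSup_of_forall_exists_le ?_ fun c hc => ⟨c, hhatValues'_subset hc, le_rfl⟩
  rintro c ⟨X, hX, htr, hA, rfl⟩
  by_cases hβ : 1 ≤ 1 ⬝ᵥ X *ᵥ 1
  · exact ⟨_, ip_Cmat_mem_hhatValues' hX htr hA hβ, le_rfl⟩
  by_cases hsep : ∃ u v, (u ∈ P ↔ v ∉ P) ∧ ¬ G.Adj u v
  · obtain ⟨u, v, huv, hadj⟩ := hsep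
    exact ⟨1 / 2, half_mem_hhatValues' huv hadj, by linarith [ip_Cmat_le P hX]⟩
  · push Not at hsep
    obtain ⟨u⟩ : Nonempty V := by
      by_contra hV
      simp [not_nonempty_iff.mp hV, Matrix.trace] at htr
    refine ⟨0, zero_mem_hhatValues' u, ?_⟩
    rw [Cmat_eq_half_adjMatrix hbip hsep, ip_smul_left, hA, mul_zero]

/-- for a bipartite regular graph `G`, `ĥ(G) = ĥ'(G)`. -/
theorem stmt10 (G : SimpleGraph V) [DecidableRel G.Adj] (P : Finset V)
    (hbip : ∀ ⦃u v⦄, G.Adj u v → (u ∈ P ↔ v ∉ P))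
    (r : ℕ) (hreg : G.IsRegularOfDegree r) :
    hhatSdp G P = hhatSdp' G P :=
  stmt10_general G P hbip
end

section
/- Let G be an r-regular graph on n vertices with r ≥ 1, with adjacency eigenvalues λ₁ = r ≥ λ₂ ≥ ... ≥ λ_n. Set μ := max{λ₂+1, −λ_n−1}. Then (n/4)·(λ₂ − λ_n)/(r − λ_n) ≤ (n/2)·μ/(μ + r + 1), with equality if and only if λ₂ = r or λ₂ + λ_n + 2 = 0. (The left-hand side equals (1/2)·φ_H(G) and the right-hand side equals ĥ(B₀(G)).) -/
/-! By Gershgorin's theorem every adjacency eigenvalue of an `r`-regular graph lies in `[-r, r]`,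
and the adjacency matrix has trace zero, so `-r ≤ λ_n ≤ 0 < r` and `λ_n ≤ λ₂ ≤ r`. If
`μ = λ₂ + 1`, the difference of the two sides is a positive multiple of `(r - λ₂)(λ₂ + λ_n + 2)`;
if `μ = -λ_n - 1`, it is a positive multiple of `-(λ₂ + λ_n + 2)`. Both are nonnegative and
vanish exactly in the stated cases. -/

open Finset Matrix

variable {V : Type*} [Fintype V] [DecidableEq V]

section eigList

variable {A : Matrix V V ℝ} (hA : A.IsHermitian)

lemma length_eigList : (eigList A hA).length = Fintype.card V := by
  simp [eigList]

lemma mem_eigList {x : ℝ} : x ∈ eigList A hA ↔ ∃ i, hA.eigenvalues i = x := by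
  simp [eigList]

lemma getD_eigList_mono {k l : ℕ} (hkl : k ≤ l) (hl : l < Fintype.card V) :
    (eigList A hA).getD k 0 ≤ (eigList A hA).getD l 0 := by
  rw [← length_eigList hA] at hl
  rw [List.getD_eq_getElem _ _ (hkl.trans_lt hl), List.getD_eq_getElem _ _ hl]
  exact (Multiset.pairwise_sort _ _).rel_get_of_le (a := ⟨k, hkl.trans_lt hl⟩) (b := ⟨l, hl⟩) hkl

lemma exists_eigenvalues_eq_getD_eigList {k : ℕ} (hk : k < Fintype.card V) :
    ∃ i, hA.eigenvalues i = (eigList A hA).getD k 0 := by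
  rw [← length_eigList hA] at hk
  rw [← mem_eigList, List.getD_eq_getElem _ _ hk]
  exact List.getElem_mem hk

lemma smallestEig_le_eigenvalues (i : V) : smallestEig A hA ≤ hA.eigenvalues i := by
  obtain ⟨k, hk, hki⟩ := List.getElem_of_mem ((mem_eigList hA).2 ⟨i, rfl⟩)
  rw [← hki, ← List.getD_eq_getElem _ 0 hk]
  exact getD_eigList_mono hA k.zero_le (length_eigList hA ▸ hk)

lemma smallestEig_le_secondLargest [Nonempty V] : smallestEig A hA ≤ secondLargest A hA :=
  getD_eigList_mono hA (Nat.zero_le _) (Nat.sub_lt Fintype.card_pos two_pos)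

lemma card_mul_smallestEig_le_trace : Fintype.card V * smallestEig A hA ≤ A.trace := by
  calc (Fintype.card V : ℝ) * smallestEig A hA = ∑ _i : V, smallestEig A hA := by simp
    _ ≤ ∑ i, hA.eigenvalues i := Finset.sum_le_sum fun i _ => smallestEig_le_eigenvalues hA i
    _ = A.trace := by simp [hA.trace_eq_sum_eigenvalues]

end eigList

namespace SimpleGraph

lemma abs_eigenvalues_adjMatrix_le {G : SimpleGraph V} [DecidableRel G.Adj] {d : ℕ}
    (hd : G.IsRegularOfDegree d) (hA : (G.adjMatrix ℝ).IsHermitian) (i : V) :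
    |hA.eigenvalues i| ≤ d := by
  have heig : Module.End.HasEigenvalue (Matrix.toLin' (G.adjMatrix ℝ)) (hA.eigenvalues i) :=
    Module.End.hasEigenvalue_iff_mem_spectrum.2 <| by
      rw [Matrix.spectrum_toLin']
      exact hA.eigenvalues_mem_spectrum_real i
  obtain ⟨k, hk⟩ := eigenvalue_mem_ball heig
  have hkk : G.adjMatrix ℝ k k = 0 := by simp
  have hrow : ∑ j ∈ Finset.univ.erase k, ‖G.adjMatrix ℝ k j‖ = d := by
    have hnorm (j : V) : ‖G.adjMatrix ℝ k j‖ = G.adjMatrix ℝ k j := by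
      by_cases h : G.Adj k j <;> simp [h]
    simp_rw [hnorm, Finset.sum_erase _ hkk]
    simpa [mulVec, dotProduct] using
      adjMatrix_mulVec_const_apply_of_regular (α := ℝ) (a := 1) hd (v := k)
  rwa [Metric.mem_closedBall, Real.dist_eq, hrow, hkk, sub_zero] at hk

end SimpleGraph

lemma haemers_ratio_le_and_eq_iff {r a b : ℝ} (hba : b ≤ a) (har : a ≤ r) (hbr : -r ≤ b)
    (hb : b < r) :
    (a - b) / (r - b) ≤ 2 * (max (a + 1) (-b - 1) / (max (a + 1) (-b - 1) + r + 1)) ∧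
    ((a - b) / (r - b) = 2 * (max (a + 1) (-b - 1) / (max (a + 1) (-b - 1) + r + 1)) ↔
      a = r ∨ a + b + 2 = 0) := by
  have hrb : 0 < r - b := by linarith
  rcases le_or_gt (-b - 1) (a + 1) with hc | hc
  · have hd : 0 < a + 1 + r + 1 := by linarith
    rw [max_eq_left hc, mul_div_assoc', div_le_div_iff₀ hrb hd, div_eq_div_iff hrb.ne' hd.ne']
    have hgap : 2 * (a + 1) * (r - b) - (a - b) * (a + 1 + r + 1) = (r - a) * (a + b + 2) := by
      ring
    refine ⟨by nlinarith [mul_nonneg (sub_nonneg.2 har) (by linarith : 0 ≤ a + b + 2)], ?_⟩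
    rw [← sub_eq_zero, ← neg_eq_zero, neg_sub, hgap, mul_eq_zero, sub_eq_zero, eq_comm]
  · rw [max_eq_right hc.le, show -b - 1 + r + 1 = r - b by ring, mul_div_assoc',
      div_le_div_iff_of_pos_right hrb, div_left_inj' hrb.ne']
    exact ⟨by linarith, fun h => Or.inr (by linarith), by rintro (h | h) <;> linarith⟩

/-- for an `r`-regular graph `G` on `n` vertices (`r ≥ 1`) with adjacency
eigenvalues `λ₁ = r ≥ λ₂ ≥ … ≥ λ_n`, setting `μ := max{λ₂+1, −λ_n−1}`, we have
`(n/4)·(λ₂ − λ_n)/(r − λ_n) ≤ (n/2)·μ/(μ + r + 1)`, with equality iff `λ₂ = r` or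
`λ₂ + λ_n + 2 = 0`.  (The left side is `(1/2)·φ_H(G)`, the right side `ĥ(B₀(G))`.) -/
theorem stmt14 [Nonempty V] (G : SimpleGraph V) [DecidableRel G.Adj]
    (r : ℕ) (hr : 1 ≤ r) (hreg : G.IsRegularOfDegree r) :
    letI n : ℕ := Fintype.card V
    letI lam2 : ℝ := secondLargest (G.adjMatrix ℝ) (adjHerm G)
    letI lamn : ℝ := smallestEig (G.adjMatrix ℝ) (adjHerm G)
    letI mu : ℝ := max (lam2 + 1) (-lamn - 1)
    (n : ℝ) / 4 * ((lam2 - lamn) / ((r : ℝ) - lamn)) ≤ (n : ℝ) / 2 * (mu / (mu + r + 1)) ∧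
    ((n : ℝ) / 4 * ((lam2 - lamn) / ((r : ℝ) - lamn)) = (n : ℝ) / 2 * (mu / (mu + r + 1)) ↔
      lam2 = (r : ℝ) ∨ lam2 + lamn + 2 = 0) := by
  have hA := adjHerm G
  set lam2 := secondLargest (G.adjMatrix ℝ) hA
  set lamn := smallestEig (G.adjMatrix ℝ) hA
  have hcard : 0 < Fintype.card V := Fintype.card_pos
  obtain ⟨i, hi⟩ : ∃ i, hA.eigenvalues i = lam2 :=
    exists_eigenvalues_eq_getD_eigList hA (Nat.sub_lt hcard two_pos)
  obtain ⟨j, hj⟩ : ∃ j, hA.eigenvalues j = lamn := exists_eigenvalues_eq_getD_eigList hA hcard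
  have hlam2_le : lam2 ≤ r := hi ▸ (abs_le.1 (G.abs_eigenvalues_adjMatrix_le hreg hA i)).2
  have hlamn_ge : -r ≤ lamn := hj ▸ (abs_le.1 (G.abs_eigenvalues_adjMatrix_le hreg hA j)).1
  have hlamn_nonpos : lamn ≤ 0 := by
    have := card_mul_smallestEig_le_trace hA
    rw [SimpleGraph.trace_adjMatrix] at this
    exact nonpos_of_mul_nonpos_right this (by exact_mod_cast hcard)
  have hr_real : (1 : ℝ) ≤ r := by exact_mod_cast hr
  have hratio := haemers_ratio_le_and_eq_iff (smallestEig_le_secondLargest hA) hlam2_le hlamn_ge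
    (by linarith)
  have hn : 0 < (Fintype.card V : ℝ) / 4 := by positivity
  rw [show ∀ mu : ℝ, (Fintype.card V : ℝ) / 2 * (mu / (mu + r + 1)) =
    Fintype.card V / 4 * (2 * (mu / (mu + r + 1))) by intro; ring]
  exact ⟨mul_le_mul_of_nonneg_left hratio.1 hn.le, (mul_right_inj' hn.ne').trans hratio.2⟩
end
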